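/- Under the stated setup, if |λ₁| < |λ₂| then lim_{h→∞} CV⁺(h)/(λ₂ʰ)^⟨α−1⟩ = D₈; equivalently, the cross-covariation CV(X₁(t),X₂(t+h)) is asymptotically D₈·(λ₂ʰ)^⟨α−1⟩ as h → ∞. -/
import Mathlib


open MeasureTheory Filter Topology

/-- The signed power `x^⟨p⟩ = |x|^p · sign x`. -/
noncomputable def spow (x p : ℝ) : ℝ := |x| ^ p * Real.sign x

/-- The unit sphere `S₂ ⊆ ℝ²`. -/
abbrev Sphere2 : Type := {s : ℝ × ℝ // s.1 ^ 2 + s.2 ^ 2 = 1}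

noncomputable def A3 (a1 a2 a3 a4 l1 l2 : ℝ) (j : ℕ) (s : Sphere2) : ℝ :=
  (-(l1 ^ j * a3 * s.1.1) + l2 * l1 ^ j * s.1.2 - l1 ^ j * a4 * s.1.2) / (l2 - l1)

noncomputable def B3 (a1 a2 a3 a4 l1 l2 : ℝ) (j : ℕ) (s : Sphere2) : ℝ :=
  (l2 ^ j * a3 * s.1.1 - l1 * l2 ^ j * s.1.2 + l2 ^ j * a4 * s.1.2) / (l2 - l1)

noncomputable def C3 (a1 a2 a3 a4 l1 l2 : ℝ) (j : ℕ) (s : Sphere2) : ℝ :=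
  (l1 ^ j * (l2 * s.1.1 - a1 * s.1.1 - a2 * s.1.2)
    + l2 ^ j * (-(l1 * s.1.1) + a1 * s.1.1 + a2 * s.1.2)) / (l2 - l1)

/-- The cross-codifference `CD(X₁(t), X₂(t+h))` of the bidimensional α-stable AR(1) model. -/
noncomputable def CDpos (Γ : Measure Sphere2) (α a1 a2 a3 a4 l1 l2 : ℝ) (h : ℕ) : ℝ :=
  ∑' j : ℕ, ∫ s,
    (|l1 ^ h * A3 a1 a2 a3 a4 l1 l2 j s + l2 ^ h * B3 a1 a2 a3 a4 l1 l2 j s| ^ α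
      + |C3 a1 a2 a3 a4 l1 l2 j s| ^ α
      - |C3 a1 a2 a3 a4 l1 l2 j s - (l1 ^ h * A3 a1 a2 a3 a4 l1 l2 j s + l2 ^ h * B3 a1 a2 a3 a4 l1 l2 j s)| ^ α) ∂Γ

/-- The cross-covariation `CV(X₁(t), X₂(t+h))` of the bidimensional α-stable AR(1) model. -/
noncomputable def CVpos (Γ : Measure Sphere2) (α a1 a2 a3 a4 l1 l2 : ℝ) (h : ℕ) : ℝ :=
  ∑' j : ℕ, ∫ s,
    C3 a1 a2 a3 a4 l1 l2 j s * spow (l1 ^ h * A3 a1 a2 a3 a4 l1 l2 j s + l2 ^ h * B3 a1 a2 a3 a4 l1 l2 j s) (α - 1) ∂Γ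

noncomputable def D4 (Γ : Measure Sphere2) (α a1 a2 a3 a4 l1 l2 : ℝ) : ℝ :=
  ∑' j : ℕ, ∫ s, A3 a1 a2 a3 a4 l1 l2 j s * spow (C3 a1 a2 a3 a4 l1 l2 j s) (α - 1) ∂Γ

noncomputable def D5 (Γ : Measure Sphere2) (α a1 a2 a3 a4 l1 l2 : ℝ) : ℝ :=
  ∑' j : ℕ, ∫ s, B3 a1 a2 a3 a4 l1 l2 j s * spow (C3 a1 a2 a3 a4 l1 l2 j s) (α - 1) ∂Γ

noncomputable def D7 (Γ : Measure Sphere2) (α a1 a2 a3 a4 l1 l2 : ℝ) : ℝ :=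
  ∑' j : ℕ, ∫ s, C3 a1 a2 a3 a4 l1 l2 j s * spow (A3 a1 a2 a3 a4 l1 l2 j s) (α - 1) ∂Γ

noncomputable def D8 (Γ : Measure Sphere2) (α a1 a2 a3 a4 l1 l2 : ℝ) : ℝ :=
  ∑' j : ℕ, ∫ s, C3 a1 a2 a3 a4 l1 l2 j s * spow (B3 a1 a2 a3 a4 l1 l2 j s) (α - 1) ∂Γ

section aux

lemma Real.sign_mul' (x y : ℝ) : Real.sign (x * y) = Real.sign x * Real.sign y := by
  rcases lt_trichotomy x 0 with hx | hx | hx <;>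
    rcases lt_trichotomy y 0 with hy | hy | hy
  · rw [Real.sign_of_pos (mul_pos_of_neg_of_neg hx hy), Real.sign_of_neg hx,
      Real.sign_of_neg hy]; ring
  · simp [hy]
  · rw [Real.sign_of_neg (mul_neg_of_neg_of_pos hx hy), Real.sign_of_neg hx,
      Real.sign_of_pos hy]; ring
  · simp [hx]
  · simp [hx]
  · simp [hx]
  · rw [Real.sign_of_neg (mul_neg_of_pos_of_neg hx hy), Real.sign_of_pos hx,
      Real.sign_of_neg hy]; ring
  · simp [hy]
  · rw [Real.sign_of_pos (mul_pos hx hy), Real.sign_of_pos hx, Real.sign_of_pos hy]; ring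

lemma spow_zero (p : ℝ) : spow 0 p = 0 := by simp [spow]

lemma spow_mul_base (x y p : ℝ) : spow (x * y) p = spow x p * spow y p := by
  unfold spow
  rw [abs_mul, Real.mul_rpow (abs_nonneg x) (abs_nonneg y), Real.sign_mul']
  ring

lemma spow_ne_zero {x : ℝ} (hx : x ≠ 0) (p : ℝ) : spow x p ≠ 0 := by
  unfold spow
  have h1 : |x| ^ p ≠ 0 := (Real.rpow_pos_of_pos (abs_pos.2 hx) p).ne'
  rcases Real.sign_apply_eq_of_ne_zero x hx with h | h <;> rw [h] <;> simp [h1]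

lemma abs_spow_le (x p : ℝ) : |spow x p| ≤ |x| ^ p := by
  unfold spow
  rw [abs_mul, abs_of_nonneg (Real.rpow_nonneg (abs_nonneg x) p)]
  rcases Real.sign_apply_eq x with h | h | h <;> rw [h] <;>
    simp [Real.rpow_nonneg (abs_nonneg x) p]

lemma continuous_spow {p : ℝ} (hp : 0 < p) : Continuous (fun x => spow x p) := by
  rw [continuous_iff_continuousAt]
  intro x
  rcases lt_trichotomy x 0 with hx | hx | hx
  · have : ∀ᶠ y in 𝓝 x, spow y p = -(|y| ^ p) := by
      filter_upwards [eventually_lt_nhds hx] with y hy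
      simp [spow, Real.sign_of_neg hy]
    refine ContinuousAt.congr ?_ (Filter.EventuallyEq.symm this)
    exact (Real.continuousAt_rpow_const _ _ (Or.inr hp.le)).comp
      continuous_abs.continuousAt |>.neg
  · subst hx
    rw [ContinuousAt, spow_zero]
    apply squeeze_zero_norm (fun y => abs_spow_le y p)
    have : Tendsto (fun y : ℝ => |y| ^ p) (𝓝 0) (𝓝 (|(0:ℝ)| ^ p)) := by
      exact ((Real.continuousAt_rpow_const _ _ (Or.inr hp.le)).comp
        continuous_abs.continuousAt)
    simpa [Real.zero_rpow hp.ne'] using this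
  · have : ∀ᶠ y in 𝓝 x, spow y p = |y| ^ p := by
      filter_upwards [eventually_gt_nhds hx] with y hy
      simp [spow, Real.sign_of_pos hy]
    refine ContinuousAt.congr ?_ (Filter.EventuallyEq.symm this)
    exact (Real.continuousAt_rpow_const _ _ (Or.inr hp.le)).comp
      continuous_abs.continuousAt

lemma abs_lin_le {c d x y : ℝ} (hx : |x| ≤ 1) (hy : |y| ≤ 1) :
    |c * x + d * y| ≤ |c| + |d| := by
  calc |c * x + d * y| ≤ |c * x| + |d * y| := abs_add_le _ _
    _ = |c| * |x| + |d| * |y| := by rw [abs_mul, abs_mul]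
    _ ≤ |c| * 1 + |d| * 1 := by gcongr
    _ = |c| + |d| := by ring



lemma sphere2_abs_fst (s : Sphere2) : |s.1.1| ≤ 1 := by
  nlinarith [s.2, sq_abs s.1.1, abs_nonneg s.1.1, sq_nonneg s.1.2]

lemma sphere2_abs_snd (s : Sphere2) : |s.1.2| ≤ 1 := by
  nlinarith [s.2, sq_abs s.1.2, abs_nonneg s.1.2, sq_nonneg s.1.1]

variable {a1 a2 a3 a4 l1 l2 : ℝ}

lemma abs_A3_le (hd : l2 - l1 ≠ 0) (j : ℕ) (s : Sphere2) :
    |A3 a1 a2 a3 a4 l1 l2 j s| ≤ (|a3| + |l2 - a4|) / |l2 - l1| * |l1| ^ j := by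
  have h : A3 a1 a2 a3 a4 l1 l2 j s
      = l1 ^ j * ((-a3) * s.1.1 + (l2 - a4) * s.1.2) / (l2 - l1) := by
    unfold A3; ring
  rw [h, abs_div, abs_mul, abs_pow]
  calc |l1| ^ j * |(-a3) * s.1.1 + (l2 - a4) * s.1.2| / |l2 - l1|
      ≤ |l1| ^ j * (|(-a3)| + |l2 - a4|) / |l2 - l1| := by
        have := abs_pos.2 hd
        gcongr
        exact abs_lin_le (sphere2_abs_fst s) (sphere2_abs_snd s)
    _ = (|a3| + |l2 - a4|) / |l2 - l1| * |l1| ^ j := by rw [abs_neg]; ring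

lemma abs_B3_le (hd : l2 - l1 ≠ 0) (j : ℕ) (s : Sphere2) :
    |B3 a1 a2 a3 a4 l1 l2 j s| ≤ (|a3| + |a4 - l1|) / |l2 - l1| * |l2| ^ j := by
  have h : B3 a1 a2 a3 a4 l1 l2 j s
      = l2 ^ j * (a3 * s.1.1 + (a4 - l1) * s.1.2) / (l2 - l1) := by
    unfold B3; ring
  rw [h, abs_div, abs_mul, abs_pow]
  calc |l2| ^ j * |a3 * s.1.1 + (a4 - l1) * s.1.2| / |l2 - l1|
      ≤ |l2| ^ j * (|a3| + |a4 - l1|) / |l2 - l1| := by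
        have := abs_pos.2 hd
        gcongr
        exact abs_lin_le (sphere2_abs_fst s) (sphere2_abs_snd s)
    _ = (|a3| + |a4 - l1|) / |l2 - l1| * |l2| ^ j := by ring

lemma abs_C3_le (hd : l2 - l1 ≠ 0) (hle : |l1| ≤ |l2|) (j : ℕ) (s : Sphere2) :
    |C3 a1 a2 a3 a4 l1 l2 j s|
      ≤ (|l2 - a1| + |a1 - l1| + 2 * |a2|) / |l2 - l1| * |l2| ^ j := by
  have h : C3 a1 a2 a3 a4 l1 l2 j s
      = (l1 ^ j * ((l2 - a1) * s.1.1 + (-a2) * s.1.2)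
        + l2 ^ j * ((a1 - l1) * s.1.1 + a2 * s.1.2)) / (l2 - l1) := by
    unfold C3; ring
  rw [h, abs_div]
  have h1 : |l1 ^ j * ((l2 - a1) * s.1.1 + (-a2) * s.1.2)|
      ≤ |l2| ^ j * (|l2 - a1| + |a2|) := by
    rw [abs_mul, abs_pow]
    have := abs_lin_le (c := l2 - a1) (d := -a2) (sphere2_abs_fst s) (sphere2_abs_snd s)
    rw [abs_neg] at this
    have hpow : |l1| ^ j ≤ |l2| ^ j := pow_le_pow_left₀ (abs_nonneg _) hle j
    exact mul_le_mul hpow this (abs_nonneg _) (by positivity)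
  have h2 : |l2 ^ j * ((a1 - l1) * s.1.1 + a2 * s.1.2)|
      ≤ |l2| ^ j * (|a1 - l1| + |a2|) := by
    rw [abs_mul, abs_pow]
    exact mul_le_mul_of_nonneg_left
      (abs_lin_le (sphere2_abs_fst s) (sphere2_abs_snd s)) (by positivity)
  calc |l1 ^ j * ((l2 - a1) * s.1.1 + (-a2) * s.1.2)
        + l2 ^ j * ((a1 - l1) * s.1.1 + a2 * s.1.2)| / |l2 - l1|
      ≤ (|l2| ^ j * (|l2 - a1| + |a2|) + |l2| ^ j * (|a1 - l1| + |a2|)) / |l2 - l1| := by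
        have := abs_pos.2 hd
        gcongr
        exact (abs_add_le _ _).trans (add_le_add h1 h2)
    _ = (|l2 - a1| + |a1 - l1| + 2 * |a2|) / |l2 - l1| * |l2| ^ j := by ring

lemma continuous_A3 (j : ℕ) : Continuous (A3 a1 a2 a3 a4 l1 l2 j) := by
  unfold A3; fun_prop

lemma continuous_B3 (j : ℕ) : Continuous (B3 a1 a2 a3 a4 l1 l2 j) := by
  unfold B3; fun_prop

lemma continuous_C3 (j : ℕ) : Continuous (C3 a1 a2 a3 a4 l1 l2 j) := by
  unfold C3; fun_prop

end aux

theorem CV_pos_asymptotic_case_II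
    (Γ : Measure Sphere2) [IsFiniteMeasure Γ]
    (α a1 a2 a3 a4 l1 l2 : ℝ) (hα1 : 1 < α) (hα2 : α < 2)
    (hl1 : l1 ^ 2 - (a1 + a4) * l1 + (a1 * a4 - a2 * a3) = 0)
    (hl2 : l2 ^ 2 - (a1 + a4) * l2 + (a1 * a4 - a2 * a3) = 0)
    (hne : l1 ≠ l2) (habs1 : |l1| < 1) (habs2 : |l2| < 1)
    (hlt : |l1| < |l2|) :
    Tendsto (fun h : ℕ => CVpos Γ α a1 a2 a3 a4 l1 l2 h / spow (l2 ^ h) (α - 1)) atTop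
      (𝓝 (D8 Γ α a1 a2 a3 a4 l1 l2)) := by
  haveI : OpensMeasurableSpace Sphere2 :=
    Subtype.opensMeasurableSpace {s : ℝ × ℝ | s.1 ^ 2 + s.2 ^ 2 = 1}
  have hd : l2 - l1 ≠ 0 := sub_ne_zero.2 hne.symm
  have hl2ne : l2 ≠ 0 := by
    intro h
    rw [h, abs_zero] at hlt
    exact (abs_nonneg l1).not_gt hlt
  have habs2pos : 0 < |l2| := abs_pos.2 hl2ne
  have hp : 0 < α - 1 := by linarith
  have hr : |l1 / l2| < 1 := by rw [abs_div]; exact (div_lt_one habs2pos).2 hlt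
  set r : ℝ := l1 / l2 with hrdef
  set KA : ℝ := (|a3| + |l2 - a4|) / |l2 - l1| with hKA
  set KB : ℝ := (|a3| + |a4 - l1|) / |l2 - l1| with hKB
  set KC : ℝ := (|l2 - a1| + |a1 - l1| + 2 * |a2|) / |l2 - l1| with hKC
  have hKA0 : 0 ≤ KA := by rw [hKA]; positivity
  have hKB0 : 0 ≤ KB := by rw [hKB]; positivity
  have hKC0 : 0 ≤ KC := by rw [hKC]; positivity
  set M : ℕ → ℝ := fun j => KC * |l2| ^ j * ((KA + KB) * |l2| ^ j) ^ (α - 1) with hM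
  -- the uniform pointwise bound
  have key_bound : ∀ (h j : ℕ) (s : Sphere2),
      ‖C3 a1 a2 a3 a4 l1 l2 j s *
        spow (r ^ h * A3 a1 a2 a3 a4 l1 l2 j s + B3 a1 a2 a3 a4 l1 l2 j s) (α - 1)‖ ≤ M j := by
    intro h j s
    rw [Real.norm_eq_abs, abs_mul]
    have hC : |C3 a1 a2 a3 a4 l1 l2 j s| ≤ KC * |l2| ^ j := by
      rw [hKC]; exact abs_C3_le hd hlt.le j s
    have hA : |A3 a1 a2 a3 a4 l1 l2 j s| ≤ KA * |l1| ^ j := by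
      rw [hKA]; exact abs_A3_le hd j s
    have hB : |B3 a1 a2 a3 a4 l1 l2 j s| ≤ KB * |l2| ^ j := by
      rw [hKB]; exact abs_B3_le hd j s
    have hX : |r ^ h * A3 a1 a2 a3 a4 l1 l2 j s + B3 a1 a2 a3 a4 l1 l2 j s|
        ≤ (KA + KB) * |l2| ^ j := by
      have hpow : |l1| ^ j ≤ |l2| ^ j := pow_le_pow_left₀ (abs_nonneg _) hlt.le j
      calc |r ^ h * A3 a1 a2 a3 a4 l1 l2 j s + B3 a1 a2 a3 a4 l1 l2 j s|
          ≤ |r ^ h * A3 a1 a2 a3 a4 l1 l2 j s| + |B3 a1 a2 a3 a4 l1 l2 j s| := abs_add_le _ _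
        _ = |r| ^ h * |A3 a1 a2 a3 a4 l1 l2 j s| + |B3 a1 a2 a3 a4 l1 l2 j s| := by
            rw [abs_mul, abs_pow]
        _ ≤ 1 * (KA * |l1| ^ j) + KB * |l2| ^ j :=
            add_le_add (mul_le_mul (pow_le_one₀ (abs_nonneg r) hr.le) hA (abs_nonneg _)
              zero_le_one) hB
        _ ≤ 1 * (KA * |l2| ^ j) + KB * |l2| ^ j :=
            add_le_add (mul_le_mul_of_nonneg_left
              (mul_le_mul_of_nonneg_left hpow hKA0) zero_le_one) le_rfl
        _ = (KA + KB) * |l2| ^ j := by ring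
    have hsp : |spow (r ^ h * A3 a1 a2 a3 a4 l1 l2 j s + B3 a1 a2 a3 a4 l1 l2 j s) (α - 1)|
        ≤ ((KA + KB) * |l2| ^ j) ^ (α - 1) :=
      (abs_spow_le _ _).trans (Real.rpow_le_rpow (abs_nonneg _) hX hp.le)
    calc |C3 a1 a2 a3 a4 l1 l2 j s| *
          |spow (r ^ h * A3 a1 a2 a3 a4 l1 l2 j s + B3 a1 a2 a3 a4 l1 l2 j s) (α - 1)|
        ≤ (KC * |l2| ^ j) * (((KA + KB) * |l2| ^ j) ^ (α - 1)) :=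
          mul_le_mul hC hsp (abs_nonneg _) (by positivity)
      _ = M j := rfl
  -- continuity in s
  have contF : ∀ (h j : ℕ), Continuous (fun s : Sphere2 =>
      C3 a1 a2 a3 a4 l1 l2 j s *
        spow (r ^ h * A3 a1 a2 a3 a4 l1 l2 j s + B3 a1 a2 a3 a4 l1 l2 j s) (α - 1)) := by
    intro h j
    exact (continuous_C3 j).mul ((continuous_spow hp).comp
      ((continuous_const.mul (continuous_A3 j)).add (continuous_B3 j)))
  -- per-j limit of integrals
  have hjlim : ∀ j : ℕ, Tendsto (fun h : ℕ => ∫ s,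
        C3 a1 a2 a3 a4 l1 l2 j s *
          spow (r ^ h * A3 a1 a2 a3 a4 l1 l2 j s + B3 a1 a2 a3 a4 l1 l2 j s) (α - 1) ∂Γ)
      atTop (𝓝 (∫ s, C3 a1 a2 a3 a4 l1 l2 j s * spow (B3 a1 a2 a3 a4 l1 l2 j s) (α - 1) ∂Γ)) := by
    intro j
    refine tendsto_integral_filter_of_dominated_convergence (fun _ => M j)
      (Eventually.of_forall fun h => (contF h j).aestronglyMeasurable)
      (Eventually.of_forall fun h => ae_of_all _ fun s => key_bound h j s)
      (integrable_const _)
      (ae_of_all _ fun s => ?_)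
    have h1 : Tendsto (fun h : ℕ => r ^ h) atTop (𝓝 0) :=
      tendsto_pow_atTop_nhds_zero_of_abs_lt_one hr
    have h2 : Tendsto (fun h : ℕ =>
        r ^ h * A3 a1 a2 a3 a4 l1 l2 j s + B3 a1 a2 a3 a4 l1 l2 j s) atTop
        (𝓝 (B3 a1 a2 a3 a4 l1 l2 j s)) := by
      have := (h1.mul_const (A3 a1 a2 a3 a4 l1 l2 j s)).add_const (B3 a1 a2 a3 a4 l1 l2 j s)
      simpa using this
    exact (((continuous_spow hp).tendsto _).comp h2).const_mul _
  -- summability of the dominating sequence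
  have hsum : Summable (fun j : ℕ => M j * (Γ Set.univ).toReal) := by
    have hq1 : |l2| ^ α < 1 := Real.rpow_lt_one (abs_nonneg _) habs2 (by linarith)
    have hq0 : 0 ≤ |l2| ^ α := Real.rpow_nonneg (abs_nonneg _) _
    have heq : ∀ j : ℕ, M j = (KC * (KA + KB) ^ (α - 1)) * (|l2| ^ α) ^ j := by
      intro j
      have e1 : ((KA + KB) * |l2| ^ j) ^ (α - 1)
          = (KA + KB) ^ (α - 1) * (|l2| ^ j) ^ (α - 1) :=
        Real.mul_rpow (by positivity) (by positivity)
      have e2 : |l2| ^ j * (|l2| ^ j) ^ (α - 1) = (|l2| ^ j) ^ α := by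
        have h3 := Real.rpow_add (pow_pos habs2pos j) 1 (α - 1)
        rw [Real.rpow_one] at h3
        rw [← h3]
        norm_num
      have e3 : (|l2| ^ j) ^ α = (|l2| ^ α) ^ j := by
        rw [← Real.rpow_natCast |l2| j, ← Real.rpow_mul (abs_nonneg _), mul_comm,
          Real.rpow_mul (abs_nonneg _), Real.rpow_natCast]
      calc M j = KC * ((KA + KB) ^ (α - 1)) * (|l2| ^ j * (|l2| ^ j) ^ (α - 1)) := by
            rw [hM]; simp only []; rw [e1]; ring
        _ = (KC * (KA + KB) ^ (α - 1)) * (|l2| ^ α) ^ j := by rw [e2, e3]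
    have hg : Summable (fun j : ℕ =>
        (KC * (KA + KB) ^ (α - 1) * (Γ Set.univ).toReal) * (|l2| ^ α) ^ j) :=
      (summable_geometric_of_lt_one hq0 hq1).mul_left _
    exact hg.congr fun j => by rw [heq j]; ring
  -- tsum-level dominated convergence
  have key : Tendsto (fun h : ℕ => ∑' j : ℕ, ∫ s,
        C3 a1 a2 a3 a4 l1 l2 j s *
          spow (r ^ h * A3 a1 a2 a3 a4 l1 l2 j s + B3 a1 a2 a3 a4 l1 l2 j s) (α - 1) ∂Γ)
      atTop (𝓝 (∑' j : ℕ, ∫ s,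
        C3 a1 a2 a3 a4 l1 l2 j s * spow (B3 a1 a2 a3 a4 l1 l2 j s) (α - 1) ∂Γ)) := by
    refine tendsto_tsum_of_dominated_convergence hsum hjlim (Eventually.of_forall fun h j => ?_)
    exact norm_integral_le_of_norm_le_const (ae_of_all _ fun s => key_bound h j s)
  -- rewrite the quotient
  have eqn : ∀ h : ℕ, CVpos Γ α a1 a2 a3 a4 l1 l2 h / spow (l2 ^ h) (α - 1)
      = ∑' j : ℕ, ∫ s, C3 a1 a2 a3 a4 l1 l2 j s *
          spow (r ^ h * A3 a1 a2 a3 a4 l1 l2 j s + B3 a1 a2 a3 a4 l1 l2 j s) (α - 1) ∂Γ := by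
    intro h
    have hnz : spow (l2 ^ h) (α - 1) ≠ 0 := spow_ne_zero (pow_ne_zero h hl2ne) _
    simp only [CVpos]
    rw [← tsum_div_const]
    refine tsum_congr fun j => ?_
    rw [← integral_div]
    refine integral_congr_ae (ae_of_all _ fun s => ?_)
    show C3 a1 a2 a3 a4 l1 l2 j s *
        spow (l1 ^ h * A3 a1 a2 a3 a4 l1 l2 j s + l2 ^ h * B3 a1 a2 a3 a4 l1 l2 j s) (α - 1)
        / spow (l2 ^ h) (α - 1)
      = C3 a1 a2 a3 a4 l1 l2 j s *
        spow (r ^ h * A3 a1 a2 a3 a4 l1 l2 j s + B3 a1 a2 a3 a4 l1 l2 j s) (α - 1)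
    have hx : l1 ^ h * A3 a1 a2 a3 a4 l1 l2 j s + l2 ^ h * B3 a1 a2 a3 a4 l1 l2 j s
        = (r ^ h * A3 a1 a2 a3 a4 l1 l2 j s + B3 a1 a2 a3 a4 l1 l2 j s) * l2 ^ h := by
      have hrl : r ^ h * l2 ^ h = l1 ^ h := by
        rw [hrdef, div_pow, div_mul_cancel₀ _ (pow_ne_zero h hl2ne)]
      calc l1 ^ h * A3 a1 a2 a3 a4 l1 l2 j s + l2 ^ h * B3 a1 a2 a3 a4 l1 l2 j s
          = r ^ h * l2 ^ h * A3 a1 a2 a3 a4 l1 l2 j s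
            + l2 ^ h * B3 a1 a2 a3 a4 l1 l2 j s := by rw [hrl]
        _ = (r ^ h * A3 a1 a2 a3 a4 l1 l2 j s + B3 a1 a2 a3 a4 l1 l2 j s) * l2 ^ h := by ring
    rw [hx, spow_mul_base, ← mul_assoc, mul_div_assoc, div_self hnz, mul_one]
  rw [show D8 Γ α a1 a2 a3 a4 l1 l2 = ∑' j : ℕ, ∫ s,
      C3 a1 a2 a3 a4 l1 l2 j s * spow (B3 a1 a2 a3 a4 l1 l2 j s) (α - 1) ∂Γ from rfl]
  exact key.congr fun h => (eqn h).symm
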